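/- arXiv:2503.20284 — 2 statements merged into one kernel-verified Lean document; each statement's English description precedes it below -/
import Mathlib

section
/- Fix β ∈ (0, 1/2). Define a sequence (α_n) by α₀ = β²/(2(1+β)) and α_{n+1} = (1−β)α_n + β·min{1/5, (β + α_n − β α_n)/(2(1+β))}. Then (α_n) is strictly increasing, bounded above by β/(1+3β), and converges to β/(1+3β). -/
/-!
On `α < β/(1+3β)` the second term of the minimum is below `β/(1+3β) < 1/5`, so there the
recursion is the affine map `x ↦ (1-β)x + β(β + (1-β)x)/(2(1+β))`, with fixed point `β/(1+3β)`
and slope `c = (1-β)(2+3β)/(2(1+β)) ∈ (0,1)`. Since `α₀` lies below the fixed point, the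
sequence stays below it, and `α_n - β/(1+3β) = cⁿ (α₀ - β/(1+3β))` increases to `0`.
-/

open Filter Topology

section AffineRecursion

variable {u : ℕ → ℝ} {L c : ℝ}

theorem forall_lt_of_sub_eq_mul_sub (hc : 0 < c) (h0 : u 0 < L)
    (hu : ∀ n, u n < L → u (n + 1) - L = c * (u n - L)) : ∀ n, u n < L := by
  intro n
  induction n with
  | zero => exact h0
  | succ n ih =>
    have := hu n ih
    nlinarith

theorem strictMono_of_sub_eq_mul_sub (hc : c < 1) (hlt : ∀ n, u n < L)
    (hu : ∀ n, u (n + 1) - L = c * (u n - L)) : StrictMono u :=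
  strictMono_nat_of_lt_succ fun n => by nlinarith [hu n, hlt n]

theorem sub_eq_pow_mul_sub (hu : ∀ n, u (n + 1) - L = c * (u n - L)) (n : ℕ) :
    u n - L = c ^ n * (u 0 - L) := by
  induction n with
  | zero => simp
  | succ n ih => rw [hu n, ih, pow_succ']; ring

theorem tendsto_of_sub_eq_mul_sub (hc : |c| < 1) (hu : ∀ n, u (n + 1) - L = c * (u n - L)) :
    Tendsto u atTop (𝓝 L) := by
  have hpow : Tendsto (fun n => L + c ^ n * (u 0 - L)) atTop (𝓝 (L + 0 * (u 0 - L))) :=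
    ((tendsto_pow_atTop_nhds_zero_of_abs_lt_one hc).mul_const _).const_add L
  rw [zero_mul, add_zero] at hpow
  exact hpow.congr fun n => by linarith [sub_eq_pow_mul_sub hu n]

end AffineRecursion

section Bootstrap

variable {β : ℝ}

noncomputable def bootstrapRate (β : ℝ) : ℝ := (1 - β) * (2 + 3 * β) / (2 * (1 + β))

theorem bootstrapRate_pos (h0 : 0 < β) (h1 : β < 1) : 0 < bootstrapRate β := by
  unfold bootstrapRate
  apply div_pos <;> nlinarith

theorem bootstrapRate_lt_one (h0 : 0 < β) : bootstrapRate β < 1 := by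
  rw [bootstrapRate, div_lt_one (by linarith)]
  nlinarith

theorem bootstrap_affine_sub (h0 : 0 < β) (x : ℝ) :
    (1 - β) * x + β * ((β + x - β * x) / (2 * (1 + β))) - β / (1 + 3 * β) =
      bootstrapRate β * (x - β / (1 + 3 * β)) := by
  have : 1 + β ≠ 0 := by linarith
  have : 1 + 3 * β ≠ 0 := by linarith
  unfold bootstrapRate
  field_simp
  ring

theorem fixedPoint_lt_one_fifth (h0 : 0 < β) (h1 : β < 1 / 2) : β / (1 + 3 * β) < 1 / 5 := by
  rw [div_lt_div_iff₀ (by linarith) (by norm_num)]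
  linarith

theorem sq_div_lt_fixedPoint (h0 : 0 < β) (h1 : β < 1) :
    β ^ 2 / (2 * (1 + β)) < β / (1 + 3 * β) := by
  rw [div_lt_div_iff₀ (by linarith) (by linarith)]
  nlinarith

/-- `β/(1+3β)` is also the fixed point of `x ↦ (β + x - βx)/(2(1+β))`, which is increasing. -/
theorem second_term_lt_fixedPoint (h0 : 0 < β) (h1 : β < 1) {x : ℝ}
    (hx : x < β / (1 + 3 * β)) :
    (β + x - β * x) / (2 * (1 + β)) < β / (1 + 3 * β) := by
  set L := β / (1 + 3 * β) with hL
  have hfix : β + L - β * L = L * (2 * (1 + β)) := by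
    rw [hL]; field_simp; ring
  rw [div_lt_iff₀ (by linarith)]
  nlinarith

theorem bootstrap_step_sub (h0 : 0 < β) (h1 : β < 1 / 2) {x : ℝ} (hx : x < β / (1 + 3 * β)) :
    (1 - β) * x + β * min (1 / 5) ((β + x - β * x) / (2 * (1 + β))) - β / (1 + 3 * β) =
      bootstrapRate β * (x - β / (1 + 3 * β)) := by
  have hmin : (β + x - β * x) / (2 * (1 + β)) ≤ 1 / 5 :=
    ((second_term_lt_fixedPoint h0 (by linarith) hx).trans (fixedPoint_lt_one_fifth h0 h1)).le
  rw [min_eq_right hmin, bootstrap_affine_sub h0]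

end Bootstrap

/-- The bootstrap recursion: for `β ∈ (0, 1/2)`, the sequence defined by
`α₀ = β²/(2(1+β))` and `α_{n+1} = (1−β)α_n + β·min{1/5, (β + α_n − βα_n)/(2(1+β))}`
is strictly increasing, bounded above by `β/(1+3β)`, and converges to `β/(1+3β)`. -/
theorem stmt12 (β : ℝ) (hβ : β ∈ Set.Ioo (0 : ℝ) (1 / 2))
    (α : ℕ → ℝ) (h0 : α 0 = β ^ 2 / (2 * (1 + β)))
    (hrec : ∀ n, α (n + 1) =
      (1 - β) * α n + β * min (1 / 5) ((β + α n - β * α n) / (2 * (1 + β)))) :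
    StrictMono α ∧ (∀ n, α n ≤ β / (1 + 3 * β)) ∧
      Filter.Tendsto α Filter.atTop (nhds (β / (1 + 3 * β))) := by
  obtain ⟨hβ0, hβ2⟩ := hβ
  have hβ1 : β < 1 := by linarith
  have hc0 := bootstrapRate_pos hβ0 hβ1
  have hc1 := bootstrapRate_lt_one hβ0
  have hstep : ∀ n, α n < β / (1 + 3 * β) →
      α (n + 1) - β / (1 + 3 * β) = bootstrapRate β * (α n - β / (1 + 3 * β)) :=
    fun n hn => by rw [hrec n]; exact bootstrap_step_sub hβ0 hβ2 hn
  have hlt := forall_lt_of_sub_eq_mul_sub hc0 (h0 ▸ sq_div_lt_fixedPoint hβ0 hβ1) hstep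
  have haffine := fun n => hstep n (hlt n)
  exact ⟨strictMono_of_sub_eq_mul_sub hc1 hlt haffine, fun n => (hlt n).le,
    tendsto_of_sub_eq_mul_sub (abs_lt.2 ⟨by linarith, hc1⟩) haffine⟩
end

section
/- Let α, β ∈ (0,1) with β ≤ 1/2 and α < β. Define Ξ(α, β, r, s) = max{αr, min{β(s−r), β/(1+β) − (2 + β/(1+β))s + r/2, αs}} for 0 ≤ r < s < 1, and λ(α,β) = min over r ∈ [0,1] of max over s ∈ (r,1) of Ξ(α,β,r,s). Then λ(α, β) ≥ αβ/(8 + 12β) > 0. -/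
/-!
Put `r₀ = β/(8+12β)`, so that the claimed bound is `α r₀`. If `r ≥ r₀`, the first branch
`α r` of `Ξ` already reaches `α r₀` for every `s`. If `r < r₀`, take `s = 2 r₀ = β/(4+6β)`:
then `β(s - r) ≥ β r₀`, `α s = 2 α r₀`, and the middle term equals `β/(2(1+β)) + r/2`,
all of which are at least `α r₀` because `α ≤ β` and `α ≤ 1`.
-/

open Set

noncomputable def xi (α β r s : ℝ) : ℝ :=
  max (α * r) (min (β * (s - r)) (min (β / (1 + β) - (2 + β / (1 + β)) * s + r / 2) (α * s)))

section

variable {α β r : ℝ}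

lemma xi_le (hα : 0 ≤ α) (hr : r ≤ 1) {s : ℝ} (hs : s ≤ 1) : xi α β r s ≤ α :=
  max_le (mul_le_of_le_one_right hα hr)
    ((min_le_right _ _).trans <| (min_le_right _ _).trans (mul_le_of_le_one_right hα hs))

lemma bddAbove_xi_image (hα : 0 ≤ α) (hr : r ≤ 1) : BddAbove (xi α β r '' Ioo r 1) :=
  ⟨α, forall_mem_image.2 fun _ hs ↦ xi_le hα hr hs.2.le⟩

lemma middle_term_at_twice (hβ : 0 ≤ β) :
    β / (1 + β) - (2 + β / (1 + β)) * (2 * (β / (8 + 12 * β))) + r / 2 =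
      β / (2 * (1 + β)) + r / 2 := by
  field_simp
  ring

lemma mul_le_xi_of_le (hα : 0 ≤ α) {r₀ : ℝ} (hr : r₀ ≤ r) (s : ℝ) : α * r₀ ≤ xi α β r s :=
  (mul_le_mul_of_nonneg_left hr hα).trans (le_max_left _ _)

lemma mul_le_xi_twice (hα : 0 ≤ α) (hαβ : α ≤ β) (hα1 : α ≤ 1) (hr0 : 0 ≤ r)
    (hr : r ≤ β / (8 + 12 * β)) :
    α * (β / (8 + 12 * β)) ≤ xi α β r (2 * (β / (8 + 12 * β))) := by
  set r₀ := β / (8 + 12 * β) with hr₀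
  have hβ : 0 ≤ β := hα.trans hαβ
  have hr₀0 : 0 ≤ r₀ := by positivity
  refine le_max_of_le_right (le_min ?_ (le_min ?_ ?_))
  · calc α * r₀ ≤ β * r₀ := mul_le_mul_of_nonneg_right hαβ hr₀0
      _ ≤ β * (2 * r₀ - r) := mul_le_mul_of_nonneg_left (by linarith) hβ
  · rw [middle_term_at_twice hβ]
    have : α * r₀ ≤ β / (2 * (1 + β)) := by
      rw [hr₀, mul_div_assoc', div_le_div_iff₀ (by positivity) (by positivity)]
      nlinarith [mul_nonneg hα hβ, mul_nonneg (sub_nonneg.2 hα1) hβ]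
    linarith
  · nlinarith

lemma mul_le_sSup_xi_image (hα : 0 ≤ α) (hαβ : α ≤ β) (hα1 : α ≤ 1) (hr0 : 0 ≤ r)
    (hr1 : r < 1) : α * (β / (8 + 12 * β)) ≤ sSup (xi α β r '' Ioo r 1) := by
  have hbdd := bddAbove_xi_image (β := β) hα hr1.le
  have hβ : 0 ≤ β := hα.trans hαβ
  rcases le_or_gt (β / (8 + 12 * β)) r with hr | hr
  · have hs : (r + 1) / 2 ∈ Ioo r 1 := ⟨by linarith, by linarith⟩
    exact le_csSup_of_le hbdd (mem_image_of_mem _ hs) (mul_le_xi_of_le hα hr _)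
  · have hs : 2 * (β / (8 + 12 * β)) ∈ Ioo r 1 := by
      refine ⟨by linarith, ?_⟩
      rw [← lt_div_iff₀' two_pos, div_lt_iff₀ (by positivity)]
      linarith
    exact le_csSup_of_le hbdd (mem_image_of_mem _ hs) (mul_le_xi_twice hα hαβ hα1 hr0 hr.le)

end

/-- Positivity of the convergence exponent `λ(α,β)` in the main theorem:
with `Ξ(α,β,r,s) = max{αr, min{β(s−r), β/(1+β) − (2+β/(1+β))s + r/2, αs}}`
(here `α < β` so `α ∧ β = α`), the exponent
`λ(α,β) = inf over r ∈ [0,1) of sup over s ∈ (r,1) of Ξ(α,β,r,s)`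
satisfies `λ(α,β) ≥ αβ/(8+12β) > 0`. -/
theorem stmt15 (α β : ℝ) (hβ : β ∈ Set.Ioc (0 : ℝ) (1 / 2))
    (hα : α ∈ Set.Ioo (0 : ℝ) β) :
    α * β / (8 + 12 * β) ≤
      sInf ((fun r : ℝ => sSup ((fun s : ℝ =>
          max (α * r) (min (β * (s - r))
            (min (β / (1 + β) - (2 + β / (1 + β)) * s + r / 2) (α * s)))) ''
        Set.Ioo r 1)) '' Set.Ico 0 1) ∧
    0 < α * β / (8 + 12 * β) := by
  obtain ⟨hβ0, hβ1⟩ := hβ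
  obtain ⟨hα0, hαβ⟩ := hα
  refine ⟨le_csInf ⟨_, mem_image_of_mem _ (left_mem_Ico.2 one_pos)⟩ ?_, by positivity⟩
  rintro _ ⟨r, ⟨hr0, hr1⟩, rfl⟩
  rw [mul_div_assoc]
  exact mul_le_sSup_xi_image hα0.le hαβ.le (by linarith) hr0 hr1
end
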